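/- arXiv:1803.09357 — 6 statements merged into one kernel-verified Lean document; each statement's English description precedes it below -/
import Mathlib

section
/- Let d ≥ 1, σ > 0, ρ > 0. Let F : ℝ^d → ℝ be bounded, twice continuously differentiable, and ρ-Hessian Lipschitz. Then for every x ∈ ℝ^d, the gradient of the Gaussian smoothing satisfies ‖∇F̃_σ(x) − ∇F(x)‖ ≤ ρ d σ². -/
/-!
Differentiating under the integral sign (`fderiv F` grows at most quadratically and the Gaussian
has finite second moments) gives `∇F̃_σ(x) = E[∇F(x + z)]`. Since the Hessian is `ρ`-Lipschitz,
`∇F(x + z) = ∇F(x) + ∇²F(x) z + R(z)` with `‖R(z)‖ ≤ ρ‖z‖²`. The linear term has mean zero, so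
`‖∇F̃_σ(x) - ∇F(x)‖ ≤ ρ E‖z‖² = ρ d σ²`.
-/

open MeasureTheory ProbabilityTheory

/-- The centered Gaussian measure `N(0, σ²I)` on `ℝ^d`, built as the product of
one-dimensional centered Gaussians of variance `σ²`. -/
noncomputable def stdGaussian (d : ℕ) (σ : ℝ) :
    Measure (EuclideanSpace ℝ (Fin d)) :=
  (Measure.pi fun _ : Fin d => gaussianReal 0 (Real.toNNReal (σ ^ 2))).map
    (MeasurableEquiv.toLp 2 (Fin d → ℝ))

/-- Gaussian smoothing `f̃_σ(x) = E_{z ~ N(0,σ²I)}[f(x+z)]`. -/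
noncomputable def gaussSmooth {d : ℕ} (σ : ℝ) (f : EuclideanSpace ℝ (Fin d) → ℝ)
    (x : EuclideanSpace ℝ (Fin d)) : ℝ :=
  ∫ z, f (x + z) ∂(stdGaussian d σ)

section LipschitzFDeriv

variable {E H : Type*} [NormedAddCommGroup E] [NormedSpace ℝ E]
  [NormedAddCommGroup H] [NormedSpace ℝ H] {g : E → H} {ρ : ℝ}

theorem norm_sub_sub_fderiv_le_of_lipschitz_fderiv (hg : Differentiable ℝ g) (hρ : 0 ≤ ρ)
    (hlip : ∀ x y, ‖fderiv ℝ g x - fderiv ℝ g y‖ ≤ ρ * ‖x - y‖) (x z : E) :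
    ‖g (x + z) - g x - fderiv ℝ g x z‖ ≤ ρ * ‖z‖ ^ 2 := by
  have hderiv : ∀ w ∈ Metric.closedBall x ‖z‖,
      HasFDerivWithinAt (fun w => g w - fderiv ℝ g x w) (fderiv ℝ g w - fderiv ℝ g x)
        (Metric.closedBall x ‖z‖) w := fun w _ =>
    ((hg w).hasFDerivAt.sub (fderiv ℝ g x).hasFDerivAt).hasFDerivWithinAt
  have hbound : ∀ w ∈ Metric.closedBall x ‖z‖, ‖fderiv ℝ g w - fderiv ℝ g x‖ ≤ ρ * ‖z‖ :=
    fun w hw => (hlip w x).trans (mul_le_mul_of_nonneg_left (mem_closedBall_iff_norm.mp hw) hρ)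
  have hxz : x + z ∈ Metric.closedBall x ‖z‖ := by simp
  have := (convex_closedBall x ‖z‖).norm_image_sub_le_of_norm_hasFDerivWithin_le hderiv hbound
    (Metric.mem_closedBall_self (norm_nonneg z)) hxz
  rw [map_add, add_sub_cancel_left] at this
  calc ‖g (x + z) - g x - fderiv ℝ g x z‖
      = ‖g (x + z) - (fderiv ℝ g x x + fderiv ℝ g x z) - (g x - fderiv ℝ g x x)‖ := by
        congr 1; abel
    _ ≤ ρ * ‖z‖ * ‖z‖ := this
    _ = ρ * ‖z‖ ^ 2 := by ring

theorem norm_add_le_of_lipschitz_fderiv (hg : Differentiable ℝ g) (hρ : 0 ≤ ρ)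
    (hlip : ∀ x y, ‖fderiv ℝ g x - fderiv ℝ g y‖ ≤ ρ * ‖x - y‖) (x u : E) :
    ‖g (x + u)‖ ≤ (‖g x‖ + ‖fderiv ℝ g x‖ + ρ) * (1 + ‖u‖) ^ 2 := by
  have htaylor := norm_sub_sub_fderiv_le_of_lipschitz_fderiv hg hρ hlip x u
  have hlin := (fderiv ℝ g x).le_opNorm u
  have htri : ‖g (x + u)‖ ≤ ‖g (x + u) - g x - fderiv ℝ g x u‖ + ‖g x‖ + ‖fderiv ℝ g x u‖ := by
    calc ‖g (x + u)‖ = ‖(g (x + u) - g x - fderiv ℝ g x u) + g x + fderiv ℝ g x u‖ := by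
          congr 1; abel
      _ ≤ _ := norm_add₃_le
  nlinarith [norm_nonneg u, norm_nonneg (g x), norm_nonneg (fderiv ℝ g x)]

end LipschitzFDeriv

section SmoothingByCentredMeasure

variable {E G : Type*} [NormedAddCommGroup E] [NormedSpace ℝ E]
  [MeasurableSpace E] [BorelSpace E] [SecondCountableTopology E]
  [NormedAddCommGroup G] [NormedSpace ℝ G]
  {μ : Measure E} {F : E → G} {ρ : ℝ}

theorem hasFDerivAt_integral_comp_add [IsFiniteMeasure μ] (hF : ContDiff ℝ 2 F)
    (hF_bd : ∃ B, ∀ x, ‖F x‖ ≤ B) (hρ : 0 ≤ ρ)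
    (hlip : ∀ x y, ‖fderiv ℝ (fderiv ℝ F) x - fderiv ℝ (fderiv ℝ F) y‖ ≤ ρ * ‖x - y‖)
    (hμ : MemLp id 2 μ) (x : E) :
    HasFDerivAt (fun y => ∫ z, F (y + z) ∂μ) (∫ z, fderiv ℝ F (x + z) ∂μ) x := by
  obtain ⟨B, hB⟩ := hF_bd
  have hF' : ContDiff ℝ 1 (fderiv ℝ F) := hF.fderiv_right (m := 1) (by norm_num)
  set C := ‖fderiv ℝ F x‖ + ‖fderiv ℝ (fderiv ℝ F) x‖ + ρ
  have hdom : ∀ z, ∀ y ∈ Metric.ball x 1, ‖fderiv ℝ F (y + z)‖ ≤ C * (2 + ‖z‖) ^ 2 := by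
    intro z y hy
    have hyz : ‖y - x + z‖ ≤ 1 + ‖z‖ :=
      (norm_add_le _ _).trans (by linarith [(mem_ball_iff_norm.mp hy).le])
    calc ‖fderiv ℝ F (y + z)‖ = ‖fderiv ℝ F (x + (y - x + z))‖ := by congr 2; abel
      _ ≤ C * (1 + ‖y - x + z‖) ^ 2 :=
        norm_add_le_of_lipschitz_fderiv (hF'.differentiable one_ne_zero) hρ hlip x _
      _ ≤ C * (2 + ‖z‖) ^ 2 := by
        have : 0 ≤ C := by positivity
        gcongr C * ?_ ^ 2
        linarith
  have hint : Integrable (fun z => C * (2 + ‖z‖) ^ 2) μ :=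
    ((memLp_const (2 : ℝ)).add hμ.norm).integrable_sq.const_mul C
  have hderiv : ∀ z, ∀ y ∈ Metric.ball x 1,
      HasFDerivAt (fun y => F (y + z)) (fderiv ℝ F (y + z)) y := fun z y _ =>
    (hasFDerivAt_comp_add_right z).mpr (hF.differentiable (by norm_num) (y + z)).hasFDerivAt
  have hF_int : Integrable (fun z => F (x + z)) μ :=
    (integrable_const B).mono' (hF.continuous.comp (continuous_const_add x)).aestronglyMeasurable
      (.of_forall fun z => hB _)
  exact hasFDerivAt_integral_of_dominated_of_fderiv_le (Metric.ball_mem_nhds x one_pos)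
    (.of_forall fun y => (hF.continuous.comp (continuous_const_add y)).aestronglyMeasurable)
    hF_int (hF'.continuous.comp (continuous_const_add x)).aestronglyMeasurable
    (.of_forall hdom) hint (.of_forall hderiv)

theorem norm_fderiv_integral_comp_add_sub_fderiv_le [CompleteSpace E] [CompleteSpace G]
    [IsProbabilityMeasure μ] (hF : ContDiff ℝ 2 F) (hF_bd : ∃ B, ∀ x, ‖F x‖ ≤ B) (hρ : 0 ≤ ρ)
    (hlip : ∀ x y, ‖fderiv ℝ (fderiv ℝ F) x - fderiv ℝ (fderiv ℝ F) y‖ ≤ ρ * ‖x - y‖)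
    (hμ : MemLp id 2 μ) (hμ_mean : ∫ z, z ∂μ = 0) (x : E) :
    ‖fderiv ℝ (fun y => ∫ z, F (y + z) ∂μ) x - fderiv ℝ F x‖ ≤ ρ * ∫ z, ‖z‖ ^ 2 ∂μ := by
  have hF' : ContDiff ℝ 1 (fderiv ℝ F) := hF.fderiv_right (m := 1) (by norm_num)
  set L := fderiv ℝ (fderiv ℝ F) x
  set R := fun z => fderiv ℝ F (x + z) - fderiv ℝ F x - L z
  have hR_le : ∀ z, ‖R z‖ ≤ ρ * ‖z‖ ^ 2 :=
    norm_sub_sub_fderiv_le_of_lipschitz_fderiv (hF'.differentiable one_ne_zero) hρ hlip x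
  have hsq : Integrable (fun z => ρ * ‖z‖ ^ 2) μ := (hμ.integrable_norm_pow' (p := 2)).const_mul ρ
  have hR_int : Integrable R μ := hsq.mono'
    ((hF'.continuous.comp (continuous_const_add x)).sub continuous_const |>.sub
      L.continuous).aestronglyMeasurable (.of_forall hR_le)
  have hid : Integrable (fun z => z) μ := hμ.integrable one_le_two
  -- the linear term of the Taylor expansion averages out because `μ` is centred
  have hmean : ∫ z, fderiv ℝ F (x + z) ∂μ = (∫ z, R z ∂μ) + fderiv ℝ F x := by
    have hlin : Integrable (fun z => fderiv ℝ F x + L z) μ :=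
      (integrable_const _).add (L.integrable_comp hid)
    calc ∫ z, fderiv ℝ F (x + z) ∂μ = ∫ z, R z + (fderiv ℝ F x + L z) ∂μ := by
          congr 1; ext z; simp [R]
      _ = (∫ z, R z ∂μ) + fderiv ℝ F x := by
          rw [integral_add hR_int hlin, integral_add (integrable_const _) (L.integrable_comp hid),
            L.integral_comp_comm hid]
          simp [hμ_mean]
  rw [(hasFDerivAt_integral_comp_add hF hF_bd hρ hlip hμ x).fderiv, hmean, add_sub_cancel_right]
  calc ‖∫ z, R z ∂μ‖ ≤ ∫ z, ρ * ‖z‖ ^ 2 ∂μ := norm_integral_le_of_norm_le hsq (.of_forall hR_le)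
    _ = ρ * ∫ z, ‖z‖ ^ 2 ∂μ := integral_const_mul ρ _

end SmoothingByCentredMeasure

section StdGaussian

variable {d : ℕ} {σ : ℝ}

instance (d : ℕ) (σ : ℝ) : IsProbabilityMeasure (stdGaussian d σ) :=
  Measure.isProbabilityMeasure_map (MeasurableEquiv.toLp 2 (Fin d → ℝ)).measurable.aemeasurable

theorem integral_sq_gaussianReal_zero (v : NNReal) : ∫ t, t ^ 2 ∂gaussianReal 0 v = v := by
  rw [← variance_of_integral_eq_zero (X := fun t => t) aemeasurable_id' (by simp),
    variance_fun_id_gaussianReal]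

theorem memLp_two_id_stdGaussian : MemLp id 2 (stdGaussian d σ) := by
  refine memLp_piLp_iff.mpr fun i => ?_
  rw [_root_.stdGaussian, memLp_map_measure_iff (by fun_prop) (by fun_prop)]
  exact (memLp_id_gaussianReal' 2 (by simp)).comp_measurePreserving (measurePreserving_eval _ i)

theorem integral_id_stdGaussian_eq_zero : ∫ z, z ∂(stdGaussian d σ) = 0 := by
  ext i
  have hcoord j : Integrable (fun z : EuclideanSpace ℝ (Fin d) => z j) (stdGaussian d σ) :=
    (memLp_piLp_iff.mp memLp_two_id_stdGaussian j).integrable one_le_two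
  rw [eval_integral_piLp hcoord, _root_.stdGaussian, integral_map_equiv]
  simp [integral_eval, integral_id_gaussianReal]

theorem integral_norm_sq_stdGaussian : ∫ z, ‖z‖ ^ 2 ∂(stdGaussian d σ) = d * σ ^ 2 := by
  have hsq i : Integrable (fun y : Fin d → ℝ => y i ^ 2)
      (Measure.pi fun _ => gaussianReal 0 (σ ^ 2).toNNReal) :=
    integrable_comp_eval (f := fun t => t ^ 2) (memLp_id_gaussianReal' 2 (by simp)).integrable_sq
  have hcoord i :
      ∫ y : Fin d → ℝ, y i ^ 2 ∂(Measure.pi fun _ => gaussianReal 0 (σ ^ 2).toNNReal) = σ ^ 2 := by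
    rw [integral_comp_eval (f := fun t => t ^ 2) (by fun_prop), integral_sq_gaussianReal_zero,
      Real.coe_toNNReal _ (sq_nonneg σ)]
  rw [_root_.stdGaussian, integral_map_equiv]
  simp_rw [EuclideanSpace.real_norm_sq_eq]
  simp [integral_finsetSum _ fun i _ => hsq i, hcoord]

end StdGaussian

theorem gaussian_smoothing_gradient_bias_general
    (d : ℕ) (σ ρ : ℝ) (hρ : 0 < ρ)
    (F : EuclideanSpace ℝ (Fin d) → ℝ) (hF_bd : ∃ B, ∀ x, |F x| ≤ B)
    (hF : ContDiff ℝ 2 F)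
    (hFhessLip : ∀ x y, ‖fderiv ℝ (fderiv ℝ F) x - fderiv ℝ (fderiv ℝ F) y‖ ≤ ρ * ‖x - y‖) :
    ∀ x : EuclideanSpace ℝ (Fin d),
      ‖gradient (gaussSmooth σ F) x - gradient F x‖ ≤ ρ * d * σ ^ 2 := by
  intro x
  have hF_bd' : ∃ B, ∀ x, ‖F x‖ ≤ B :=
    hF_bd.imp fun B hB x => (Real.norm_eq_abs _).trans_le (hB x)
  calc ‖gradient (gaussSmooth σ F) x - gradient F x‖
      = ‖fderiv ℝ (gaussSmooth σ F) x - fderiv ℝ F x‖ := by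
        rw [gradient, gradient, ← map_sub, LinearIsometryEquiv.norm_map]
    _ ≤ ρ * ∫ z, ‖z‖ ^ 2 ∂(stdGaussian d σ) :=
        norm_fderiv_integral_comp_add_sub_fderiv_le hF hF_bd' hρ.le hFhessLip
          memLp_two_id_stdGaussian integral_id_stdGaussian_eq_zero x
    _ = ρ * d * σ ^ 2 := by rw [integral_norm_sq_stdGaussian, mul_assoc]

/-- if `F` is bounded, C² and `ρ`-Hessian Lipschitz, then
`‖∇F̃_σ(x) - ∇F(x)‖ ≤ ρ d σ²`. -/
theorem gaussian_smoothing_gradient_bias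
    (d : ℕ) (hd : 1 ≤ d) (σ ρ : ℝ) (hσ : 0 < σ) (hρ : 0 < ρ)
    (F : EuclideanSpace ℝ (Fin d) → ℝ) (hF_bd : ∃ B, ∀ x, |F x| ≤ B)
    (hF : ContDiff ℝ 2 F)
    (hFhessLip : ∀ x y, ‖fderiv ℝ (fderiv ℝ F) x - fderiv ℝ (fderiv ℝ F) y‖ ≤ ρ * ‖x - y‖) :
    ∀ x : EuclideanSpace ℝ (Fin d),
      ‖gradient (gaussSmooth σ F) x - gradient F x‖ ≤ ρ * d * σ ^ 2 :=
  gaussian_smoothing_gradient_bias_general d σ ρ hρ F hF_bd hF hFhessLip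
end

section
/- Let f : ℝ^d → ℝ be differentiable and ℓ-gradient Lipschitz with ℓ > 0, let 0 < η ≤ 1/ℓ, let x, ζ ∈ ℝ^d, and set x⁺ = x − η(∇f(x) + ζ). Then f(x⁺) − f(x) ≤ −(η/4)·‖∇f(x)‖² + 5η·‖ζ‖². -/
/-!
Along the segment `t ↦ x + t • v`, the Lipschitz bound on the gradient gives the slope estimate
`⟪∇f (x + t • v), v⟫ ≤ ⟪∇f x, v⟫ + ℓ t ‖v‖²`, and integrating it (by the fencing form of the mean
value theorem) yields the descent lemma `f (x + v) ≤ f x + ⟪∇f x, v⟫ + (ℓ/2) ‖v‖²`. For the step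
`v = -η (∇f x + ζ)` with `η ℓ ≤ 1` the quadratic term is at most `(η/2) ‖∇f x + ζ‖²`; expanding it,
the cross terms `⟪∇f x, ζ⟫` cancel and `f (x⁺) - f x ≤ -(η/2) ‖∇f x‖² + (η/2) ‖ζ‖²`.
-/

open scoped RealInnerProductSpace

variable {E : Type*} [NormedAddCommGroup E] [InnerProductSpace ℝ E] [CompleteSpace E]

theorem DifferentiableAt.hasDerivAt_comp_add_smul {f : E → ℝ} {x v : E} {t : ℝ}
    (hf : DifferentiableAt ℝ f (x + t • v)) :
    HasDerivAt (fun s : ℝ => f (x + s • v)) ⟪gradient f (x + t • v), v⟫ t := by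
  have hline : HasDerivAt (fun s : ℝ => x + s • v) v t := by
    simpa using ((hasDerivAt_id t).smul_const v).const_add x
  rw [inner_gradient_left]
  exact hf.hasFDerivAt.comp_hasDerivAt t hline

theorem inner_gradient_add_smul_le {f : E → ℝ} {ℓ : ℝ} {x : E}
    (hlip : ∀ y, ‖gradient f y - gradient f x‖ ≤ ℓ * ‖y - x‖) (v : E) {t : ℝ} (ht : 0 ≤ t) :
    ⟪gradient f (x + t • v), v⟫ ≤ ⟪gradient f x, v⟫ + ℓ * t * ‖v‖ ^ 2 := by
  calc ⟪gradient f (x + t • v), v⟫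
      = ⟪gradient f x, v⟫ + ⟪gradient f (x + t • v) - gradient f x, v⟫ := by
        rw [inner_sub_left]; ring
    _ ≤ ⟪gradient f x, v⟫ + ‖gradient f (x + t • v) - gradient f x‖ * ‖v‖ := by
        gcongr; exact real_inner_le_norm _ _
    _ ≤ ⟪gradient f x, v⟫ + ℓ * ‖t • v‖ * ‖v‖ := by
        gcongr; simpa using hlip (x + t • v)
    _ = ⟪gradient f x, v⟫ + ℓ * t * ‖v‖ ^ 2 := by
        rw [norm_smul, Real.norm_of_nonneg ht]; ring

theorem le_add_inner_gradient_add_of_gradient_lipschitz {f : E → ℝ} {ℓ : ℝ} {x : E}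
    (hf : Differentiable ℝ f) (hlip : ∀ y, ‖gradient f y - gradient f x‖ ≤ ℓ * ‖y - x‖)
    (v : E) : f (x + v) ≤ f x + ⟪gradient f x, v⟫ + ℓ / 2 * ‖v‖ ^ 2 := by
  set B : ℝ → ℝ := fun s => f x + s * ⟪gradient f x, v⟫ + ℓ / 2 * s ^ 2 * ‖v‖ ^ 2
  have hφ (t : ℝ) := (hf (x + t • v)).hasDerivAt_comp_add_smul
  have hB (t : ℝ) : HasDerivAt B (⟪gradient f x, v⟫ + ℓ * t * ‖v‖ ^ 2) t :=
    ((((hasDerivAt_id' t).mul_const _).const_add (f x)).add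
      (((hasDerivAt_pow 2 t).const_mul (ℓ / 2)).mul_const (‖v‖ ^ 2))).congr_deriv
      (by push_cast; ring)
  have hle := image_le_of_deriv_right_le_deriv_boundary (a := 0) (b := 1)
    (fun t _ => (hφ t).continuousAt.continuousWithinAt) (fun t _ => (hφ t).hasDerivWithinAt)
    (by simp [B]) (fun t _ => (hB t).continuousAt.continuousWithinAt)
    (fun t _ => (hB t).hasDerivWithinAt) (fun t ht => inner_gradient_add_smul_le hlip v ht.1)
    (Set.right_mem_Icc.2 zero_le_one)
  simpa [B] using hle

theorem noisy_gradient_step_sub_le {f : E → ℝ} {ℓ η : ℝ} {x : E} (hf : Differentiable ℝ f)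
    (hlip : ∀ y, ‖gradient f y - gradient f x‖ ≤ ℓ * ‖y - x‖) (hη : 0 ≤ η) (hηℓ : η * ℓ ≤ 1)
    (ζ : E) :
    f (x - η • (gradient f x + ζ)) - f x
      ≤ -(η / 2) * ‖gradient f x‖ ^ 2 + η / 2 * ‖ζ‖ ^ 2 := by
  set g := gradient f x
  have hdescent := le_add_inner_gradient_add_of_gradient_lipschitz hf hlip (-(η • (g + ζ)))
  rw [← sub_eq_add_neg, inner_neg_right, inner_smul_right, inner_add_right,
    real_inner_self_eq_norm_sq, norm_neg, norm_smul, Real.norm_of_nonneg hη, mul_pow,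
    norm_add_sq_real] at hdescent
  have hquad : ℓ / 2 * (η ^ 2 * ‖g + ζ‖ ^ 2) ≤ η / 2 * ‖g + ζ‖ ^ 2 := by
    have := mul_le_mul_of_nonneg_right hηℓ (mul_nonneg hη (sq_nonneg ‖g + ζ‖))
    linarith
  rw [norm_add_sq_real] at hquad
  linarith

theorem noisy_gradient_descent_step_general
    {d : ℕ} (ℓ η : ℝ)
    (f : EuclideanSpace ℝ (Fin d) → ℝ) (hf : Differentiable ℝ f)
    (hlip : ∀ x y, ‖gradient f x - gradient f y‖ ≤ ℓ * ‖x - y‖)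
    (hη : 0 < η) (hη' : η ≤ 1 / ℓ)
    (x ζ : EuclideanSpace ℝ (Fin d)) :
    f (x - η • (gradient f x + ζ)) - f x
      ≤ -(η / 4) * ‖gradient f x‖ ^ 2 + 5 * η * ‖ζ‖ ^ 2 := by
  have hηℓ : η * ℓ ≤ 1 := by
    rcases le_or_gt ℓ 0 with hℓ | hℓ
    · nlinarith
    · rwa [le_div_iff₀ hℓ] at hη'
  have hstep := noisy_gradient_step_sub_le hf (fun y => hlip y x) hη.le hηℓ ζ
  have hg := mul_nonneg hη.le (sq_nonneg ‖gradient f x‖)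
  have hζ := mul_nonneg hη.le (sq_nonneg ‖ζ‖)
  linarith

/-- one step of (noisy) gradient descent with step size `η ≤ 1/ℓ` on an
`ℓ`-gradient Lipschitz function decreases the value:
`f(x - η(∇f(x) + ζ)) - f(x) ≤ -(η/4)‖∇f(x)‖² + 5η‖ζ‖²`. -/
theorem noisy_gradient_descent_step
    {d : ℕ} (ℓ η : ℝ) (hℓ : 0 < ℓ)
    (f : EuclideanSpace ℝ (Fin d) → ℝ) (hf : Differentiable ℝ f)
    (hlip : ∀ x y, ‖gradient f x - gradient f y‖ ≤ ℓ * ‖x - y‖)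
    (hη : 0 < η) (hη' : η ≤ 1 / ℓ)
    (x ζ : EuclideanSpace ℝ (Fin d)) :
    f (x - η • (gradient f x + ζ)) - f x
      ≤ -(η / 4) * ‖gradient f x‖ ^ 2 + 5 * η * ‖ζ‖ ^ 2 :=
  noisy_gradient_descent_step_general ℓ η f hf hlip hη hη' x ζ
end

section
/- Let f : ℝ^d → ℝ be differentiable and ℓ-gradient Lipschitz with ℓ > 0, let 0 < η ≤ 1/ℓ, let T ≥ 1, and let vectors ζ₀, …, ζ_{T−1} ∈ ℝ^d be given. Define a sequence by x_{t+1} = x_t − η(∇f(x_t) + ζ_t) for t = 0, …, T−1, starting from any x₀ ∈ ℝ^d. Then for every t ≤ T, ‖x_t − x₀‖² ≤ 8ηT·(f(x₀) − f(x_T)) + 50η²T·Σ_{τ=0}^{T−1} ‖ζ_τ‖². -/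
/-!
The descent lemma for an `ℓ`-smooth function shows that a noisy gradient step of size `η ≤ 1/ℓ`
moving by `δ` decreases `f` by at least `‖δ‖² / (4η) - η‖ζ‖²`. Summing over the `T` steps,
the function values telescope, so `∑ ‖x_{τ+1} - x_τ‖² ≤ 4η(f(x₀) - f(x_T)) + 4η² ∑ ‖ζ_τ‖²`;
by the triangle inequality and Cauchy–Schwarz, `‖x_t - x₀‖²` is at most `T` times this sum.
-/

open scoped RealInnerProductSpace
open Finset

section Descent

variable {E : Type*} [NormedAddCommGroup E] [InnerProductSpace ℝ E] [CompleteSpace E]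
  {f : E → ℝ} {ℓ : ℝ}

theorem le_add_inner_gradient_add_of_lipschitz_gradient (hf : Differentiable ℝ f)
    (hlip : ∀ x y, ‖gradient f x - gradient f y‖ ≤ ℓ * ‖x - y‖) (x v : E) :
    f (x + v) ≤ f x + ⟪gradient f x, v⟫ + ℓ / 2 * ‖v‖ ^ 2 := by
  set g : ℝ → ℝ := fun t => f (x + t • v) - t * ⟪gradient f x, v⟫ - ℓ / 2 * t ^ 2 * ‖v‖ ^ 2
  have hg : ∀ t, HasDerivAt g
      (⟪gradient f (x + t • v), v⟫ - ⟪gradient f x, v⟫ - ℓ * t * ‖v‖ ^ 2) t := by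
    intro t
    have hline : HasDerivAt (fun s : ℝ => x + s • v) v t := by
      simpa using ((hasDerivAt_id t).smul_const v).const_add x
    have hfline := (hf (x + t • v)).hasGradientAt.hasFDerivAt.comp_hasDerivAt t hline
    refine ((hfline.sub ((hasDerivAt_id t).mul_const ⟪gradient f x, v⟫)).sub
      (((hasDerivAt_pow 2 t).const_mul (ℓ / 2)).mul_const (‖v‖ ^ 2))).congr_deriv ?_
    simp only [InnerProductSpace.toDual_apply_apply]
    ring
  have hg' : ∀ t ≥ 0, ⟪gradient f (x + t • v), v⟫ - ⟪gradient f x, v⟫ - ℓ * t * ‖v‖ ^ 2 ≤ 0 := by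
    intro t ht
    have : ⟪gradient f (x + t • v) - gradient f x, v⟫ ≤ ℓ * t * ‖v‖ ^ 2 :=
      calc ⟪gradient f (x + t • v) - gradient f x, v⟫
          ≤ ‖gradient f (x + t • v) - gradient f x‖ * ‖v‖ := real_inner_le_norm _ _
        _ ≤ ℓ * ‖t • v‖ * ‖v‖ :=
          mul_le_mul_of_nonneg_right (by simpa using hlip (x + t • v) x) (norm_nonneg v)
        _ = ℓ * t * ‖v‖ ^ 2 := by rw [norm_smul, Real.norm_of_nonneg ht]; ring
    rw [inner_sub_left] at this
    linarith
  have hanti : AntitoneOn g (Set.Ici 0) :=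
    antitoneOn_of_hasDerivWithinAt_nonpos (convex_Ici 0)
      (fun t _ => (hg t).continuousAt.continuousWithinAt) (fun t _ => (hg t).hasDerivWithinAt)
      (fun t ht => hg' t (le_of_lt (by simpa using ht)))
  have h : g 1 ≤ g 0 := hanti Set.self_mem_Ici (Set.mem_Ici.mpr zero_le_one) zero_le_one
  simp only [g, zero_smul, add_zero, one_smul] at h
  linarith

theorem norm_sq_le_of_noisy_gradient_step {η : ℝ} (hf : Differentiable ℝ f)
    (hlip : ∀ x y, ‖gradient f x - gradient f y‖ ≤ ℓ * ‖x - y‖) (hη : 0 ≤ η) (hηℓ : η * ℓ ≤ 1)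
    (x ζ : E) :
    ‖η • (gradient f x + ζ)‖ ^ 2
      ≤ 4 * η * (f x - f (x - η • (gradient f x + ζ))) + 4 * η ^ 2 * ‖ζ‖ ^ 2 := by
  set w := gradient f x + ζ
  have hdesc := le_add_inner_gradient_add_of_lipschitz_gradient hf hlip x (-(η • w))
  rw [← sub_eq_add_neg, inner_neg_right, real_inner_smul_right, norm_neg, norm_smul,
    Real.norm_of_nonneg hη] at hdesc
  have hinner : ⟪gradient f x, w⟫ = ‖w‖ ^ 2 - ⟪ζ, w⟫ := by
    rw [← real_inner_self_eq_norm_sq, ← inner_sub_left, add_sub_cancel_right]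
  have hζw : ⟪ζ, w⟫ ≤ ‖ζ‖ * ‖w‖ := real_inner_le_norm ζ w
  -- `ηℓ ≤ 1` absorbs the curvature term, and `‖ζ‖‖w‖ ≤ ‖w‖²/4 + ‖ζ‖²`.
  have hdecrease : η * (‖w‖ ^ 2 / 4 - ‖ζ‖ ^ 2) ≤ f x - f (x - η • w) := by
    nlinarith [mul_nonneg hη (sq_nonneg ‖w‖), mul_nonneg hη (sq_nonneg (‖w‖ - 2 * ‖ζ‖)),
      mul_le_mul_of_nonneg_left hζw hη]
  rw [norm_smul, Real.norm_of_nonneg hη]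
  nlinarith [mul_le_mul_of_nonneg_left hdecrease hη]

theorem sum_norm_sq_succ_sub_le_of_noisy_gradient_descent {η : ℝ} (hf : Differentiable ℝ f)
    (hlip : ∀ x y, ‖gradient f x - gradient f y‖ ≤ ℓ * ‖x - y‖) (hη : 0 ≤ η) (hηℓ : η * ℓ ≤ 1)
    {T : ℕ} {ζ x : ℕ → E} (hupd : ∀ t < T, x (t + 1) = x t - η • (gradient f (x t) + ζ t)) :
    ∑ τ ∈ range T, ‖x (τ + 1) - x τ‖ ^ 2
      ≤ 4 * η * (f (x 0) - f (x T)) + 4 * η ^ 2 * ∑ τ ∈ range T, ‖ζ τ‖ ^ 2 := by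
  have hstep : ∀ τ ∈ range T, ‖x (τ + 1) - x τ‖ ^ 2
      ≤ 4 * η * (f (x τ) - f (x (τ + 1))) + 4 * η ^ 2 * ‖ζ τ‖ ^ 2 := by
    intro τ hτ
    rw [hupd τ (mem_range.mp hτ), sub_sub_cancel_left, norm_neg]
    exact norm_sq_le_of_noisy_gradient_step hf hlip hη hηℓ (x τ) (ζ τ)
  calc ∑ τ ∈ range T, ‖x (τ + 1) - x τ‖ ^ 2
      ≤ ∑ τ ∈ range T, (4 * η * (f (x τ) - f (x (τ + 1))) + 4 * η ^ 2 * ‖ζ τ‖ ^ 2) :=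
        sum_le_sum hstep
    _ = 4 * η * (f (x 0) - f (x T)) + 4 * η ^ 2 * ∑ τ ∈ range T, ‖ζ τ‖ ^ 2 := by
        rw [sum_add_distrib, ← mul_sum, ← mul_sum, sum_range_sub' (fun τ => f (x τ))]

end Descent

theorem norm_sub_sq_le_mul_sum_norm_sq_succ_sub {E : Type*} [SeminormedAddCommGroup E]
    (x : ℕ → E) {t T : ℕ} (htT : t ≤ T) :
    ‖x t - x 0‖ ^ 2 ≤ T * ∑ τ ∈ range T, ‖x (τ + 1) - x τ‖ ^ 2 := by
  have hpath : ‖x t - x 0‖ ≤ ∑ τ ∈ range t, ‖x (τ + 1) - x τ‖ := by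
    rw [← sum_range_sub x t]
    exact norm_sum_le _ _
  calc ‖x t - x 0‖ ^ 2 ≤ (∑ τ ∈ range t, ‖x (τ + 1) - x τ‖) ^ 2 := by gcongr
    _ ≤ t * ∑ τ ∈ range t, ‖x (τ + 1) - x τ‖ ^ 2 := by
        simpa using sq_sum_le_card_mul_sum_sq (s := range t) (f := fun τ => ‖x (τ + 1) - x τ‖)
    _ ≤ T * ∑ τ ∈ range T, ‖x (τ + 1) - x τ‖ ^ 2 := by gcongr

theorem improve_or_localize_general
    {d : ℕ} (ℓ η : ℝ) (hℓ : 0 < ℓ)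
    (f : EuclideanSpace ℝ (Fin d) → ℝ) (hf : Differentiable ℝ f)
    (hlip : ∀ x y, ‖gradient f x - gradient f y‖ ≤ ℓ * ‖x - y‖)
    (hη : 0 < η) (hη' : η ≤ 1 / ℓ)
    (T : ℕ)
    (ζ : ℕ → EuclideanSpace ℝ (Fin d)) (x : ℕ → EuclideanSpace ℝ (Fin d))
    (hupd : ∀ t < T, x (t + 1) = x t - η • (gradient f (x t) + ζ t)) :
    ∀ t ≤ T,
      ‖x t - x 0‖ ^ 2
        ≤ 8 * η * T * (f (x 0) - f (x T))
          + 50 * η ^ 2 * T * ∑ τ ∈ Finset.range T, ‖ζ τ‖ ^ 2 := by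
  intro t htT
  have hηℓ : η * ℓ ≤ 1 := by rwa [le_div_iff₀ hℓ] at hη'
  have hsum := sum_norm_sq_succ_sub_le_of_noisy_gradient_descent hf hlip hη.le hηℓ hupd
  have hbound_nonneg : 0 ≤ 4 * η * (f (x 0) - f (x T)) + 4 * η ^ 2 * ∑ τ ∈ range T, ‖ζ τ‖ ^ 2 :=
    (sum_nonneg fun τ _ => sq_nonneg _).trans hsum
  have hnoise_nonneg : 0 ≤ ∑ τ ∈ range T, ‖ζ τ‖ ^ 2 := sum_nonneg fun τ _ => sq_nonneg _
  have hT_nonneg : (0 : ℝ) ≤ T := T.cast_nonneg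
  calc ‖x t - x 0‖ ^ 2 ≤ T * ∑ τ ∈ range T, ‖x (τ + 1) - x τ‖ ^ 2 :=
        norm_sub_sq_le_mul_sum_norm_sq_succ_sub x htT
    _ ≤ T * (4 * η * (f (x 0) - f (x T)) + 4 * η ^ 2 * ∑ τ ∈ range T, ‖ζ τ‖ ^ 2) := by gcongr
    _ ≤ _ := by
        linarith [mul_nonneg hT_nonneg hbound_nonneg,
          mul_nonneg (mul_nonneg hT_nonneg (sq_nonneg η)) hnoise_nonneg]

/-- improve or localize: for a noisy gradient descent sequence
`x_{t+1} = x_t - η(∇f(x_t) + ζ_t)` with `η ≤ 1/ℓ` on an `ℓ`-gradient Lipschitz function,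
for all `t ≤ T`,
`‖x_t - x_0‖² ≤ 8ηT(f(x_0) - f(x_T)) + 50η²T Σ_{τ<T} ‖ζ_τ‖²`. -/
theorem improve_or_localize
    {d : ℕ} (ℓ η : ℝ) (hℓ : 0 < ℓ)
    (f : EuclideanSpace ℝ (Fin d) → ℝ) (hf : Differentiable ℝ f)
    (hlip : ∀ x y, ‖gradient f x - gradient f y‖ ≤ ℓ * ‖x - y‖)
    (hη : 0 < η) (hη' : η ≤ 1 / ℓ)
    (T : ℕ) (hT : 1 ≤ T)
    (ζ : ℕ → EuclideanSpace ℝ (Fin d)) (x : ℕ → EuclideanSpace ℝ (Fin d))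
    (hupd : ∀ t < T, x (t + 1) = x t - η • (gradient f (x t) + ζ t)) :
    ∀ t ≤ T,
      ‖x t - x 0‖ ^ 2
        ≤ 8 * η * T * (f (x 0) - f (x T))
          + 50 * η ^ 2 * T * ∑ τ ∈ Finset.range T, ‖ζ τ‖ ^ 2 :=
  improve_or_localize_general ℓ η hℓ f hf hlip hη hη' T ζ x hupd
end

section
/- Let d ≥ 2, let w⋆ ∈ ℝ^d with ‖w⋆‖ = 1, and let w ∈ ℝ^d with w ≠ 0 and ⟨w, w⋆⟩ > 0. Set θ = arccos(⟨w, w⋆⟩/‖w‖) ∈ [0, π/2) and define G(w) = (1/2)(w − w⋆) + (1/(2π))·(θ·w⋆ − (w/‖w‖)·sin θ). Then ⟨G(w), w − w⋆⟩ ≥ (1/10)·‖w − w⋆‖². -/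
/-!
Write `r = ‖w‖` and let `θ` be the angle between `w` and `w⋆`, so that `⟪w, w⋆⟫ = r cos θ` and
`‖w - w⋆‖² = (r - cos θ)² + sin² θ`. Expanding the inner product reduces the claim to the scalar
inequality `θ (1 - r cos θ) + sin θ (r - cos θ) ≤ (4π/5) ‖w - w⋆‖²`. Its left side equals
`θ sin² θ + (r - cos θ)(sin θ - θ cos θ)`; Jordan's inequality `θ ≤ (π/2) sin θ` gives
`|sin θ - θ cos θ| ≤ sin θ`, and AM-GM then bounds the left side by
`(π/2) sin² θ + ((r - cos θ)² + sin² θ)/2`, which is small enough because `π > 3`.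
-/

open Real InnerProductGeometry

lemma abs_sin_sub_mul_cos_le_sin {θ : ℝ} (h0 : 0 ≤ θ) (h1 : θ ≤ π / 2) :
    |sin θ - θ * cos θ| ≤ sin θ := by
  have hcos0 : 0 ≤ cos θ := cos_nonneg_of_neg_pi_div_two_le_of_le (by linarith [pi_pos]) h1
  have hjordan : θ ≤ π / 2 * sin θ :=
    calc θ = π / 2 * (2 / π * θ) := by field_simp
      _ ≤ π / 2 * sin θ := by gcongr; exact mul_le_sin h0 h1
  have hθcos : θ * cos θ ≤ θ := mul_le_of_le_one_right h0 (cos_le_one θ)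
  rw [abs_le]
  constructor <;> nlinarith [pi_lt_four, sin_nonneg_of_nonneg_of_le_pi h0 (by linarith [pi_pos]),
    mul_nonneg h0 hcos0]

lemma relu_gradient_scalar_bound (r : ℝ) {θ : ℝ} (h0 : 0 ≤ θ) (h1 : θ ≤ π / 2) :
    1 / (2 * π) * (θ * (1 - r * cos θ) + sin θ * (r - cos θ))
      ≤ 2 / 5 * (r ^ 2 - 2 * r * cos θ + 1) := by
  set a := r - cos θ
  set s := sin θ
  have hsplit : θ * (1 - r * cos θ) + s * a = θ * s ^ 2 + a * (s - θ * cos θ) := by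
    linear_combination (-θ) * sin_sq_add_cos_sq θ
  have hnorm : r ^ 2 - 2 * r * cos θ + 1 = a ^ 2 + s ^ 2 := by
    linear_combination (-1 : ℝ) * sin_sq_add_cos_sq θ
  have hcross : a * (s - θ * cos θ) ≤ (a ^ 2 + s ^ 2) / 2 := calc
    a * (s - θ * cos θ) ≤ |a| * |s - θ * cos θ| := abs_mul a _ ▸ le_abs_self _
    _ ≤ |a| * s := by gcongr; exact abs_sin_sub_mul_cos_le_sin h0 h1
    _ ≤ (a ^ 2 + s ^ 2) / 2 := by nlinarith [two_mul_le_add_sq |a| s, sq_abs a]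
  have hθs : θ * s ^ 2 ≤ π / 2 * s ^ 2 := mul_le_mul_of_nonneg_right h1 (sq_nonneg s)
  rw [hsplit, hnorm, div_mul_eq_mul_div, div_le_iff₀ (by positivity)]
  nlinarith [pi_gt_three, mul_nonneg (sub_nonneg.2 pi_gt_three.le) (sq_nonneg a),
    mul_nonneg (sub_nonneg.2 pi_gt_three.le) (sq_nonneg s)]

theorem relu_population_gradient_one_point_convex_general
    (d : ℕ) (wstar w : EuclideanSpace ℝ (Fin d))
    (hws : ‖wstar‖ = 1) (hpos : 0 < (inner ℝ w wstar : ℝ)) :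
    (1 / 10 : ℝ) * ‖w - wstar‖ ^ 2
      ≤ (inner ℝ
          ((1 / 2 : ℝ) • (w - wstar) +
            (1 / (2 * Real.pi)) •
              (Real.arccos ((inner ℝ w wstar : ℝ) / ‖w‖) • wstar -
                Real.sin (Real.arccos ((inner ℝ w wstar : ℝ) / ‖w‖)) • (‖w‖⁻¹ • w)))
          (w - wstar) : ℝ) := by
  have hr : 0 < ‖w‖ := norm_pos_iff.mpr (by rintro rfl; simp at hpos)
  rw [show arccos (inner ℝ w wstar / ‖w‖) = angle w wstar by rw [angle, hws, mul_one]]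
  set θ := angle w wstar
  have hcos : inner ℝ w wstar = ‖w‖ * cos θ := by
    rw [← cos_angle_mul_norm_mul_norm, hws]; ring
  have hθ1 : θ ≤ π / 2 := arccos_le_pi_div_two.mpr (by positivity)
  have hnormalized : inner ℝ (‖w‖⁻¹ • w) (w - wstar) = ‖w‖ - cos θ := by
    rw [real_inner_smul_left, inner_sub_right, real_inner_self_eq_norm_sq, hcos]
    field_simp
  have hwstar : inner ℝ wstar (w - wstar) = ‖w‖ * cos θ - 1 := by
    rw [inner_sub_right, real_inner_comm, hcos, real_inner_self_eq_norm_sq, hws, one_pow]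
  rw [inner_add_left, real_inner_smul_left, real_inner_self_eq_norm_sq, real_inner_smul_left,
    inner_sub_left, real_inner_smul_left, real_inner_smul_left, hnormalized, hwstar, norm_sub_sq_real,
    hws, hcos]
  linarith [relu_gradient_scalar_bound ‖w‖ (angle_nonneg w wstar) hθ1]

/-- one-point convexity for the ReLU population gradient: with
`θ = arccos(⟨w,w⋆⟩/‖w‖)` and
`G(w) = (1/2)(w - w⋆) + (1/2π)(θ w⋆ - (w/‖w‖) sin θ)`, if `‖w⋆‖ = 1`, `w ≠ 0` and
`⟨w,w⋆⟩ > 0`, then `⟨G(w), w - w⋆⟩ ≥ (1/10)‖w - w⋆‖²`. -/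
theorem relu_population_gradient_one_point_convex
    (d : ℕ) (hd : 2 ≤ d) (wstar w : EuclideanSpace ℝ (Fin d))
    (hws : ‖wstar‖ = 1) (hw0 : w ≠ 0) (hpos : 0 < (inner ℝ w wstar : ℝ)) :
    (1 / 10 : ℝ) * ‖w - wstar‖ ^ 2
      ≤ (inner ℝ
          ((1 / 2 : ℝ) • (w - wstar) +
            (1 / (2 * Real.pi)) •
              (Real.arccos ((inner ℝ w wstar : ℝ) / ‖w‖) • wstar -
                Real.sin (Real.arccos ((inner ℝ w wstar : ℝ) / ‖w‖)) • (‖w‖⁻¹ • w)))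
          (w - wstar) : ℝ) :=
  relu_population_gradient_one_point_convex_general d wstar w hws hpos
end

section
/- Let d ≥ 2, let w⋆ ∈ ℝ^d with ‖w⋆‖ = 1, and define R : ℝ^d \ {0} → ℝ by R(w) = (1/4)‖w‖² + 5/4 − (1/(2π))·‖w‖·(sin θ(w) + (π − θ(w))·cos θ(w)), where θ(w) = arccos(⟨w, w⋆⟩/‖w‖). Then at every w ≠ 0 that is not a scalar multiple of w⋆ (i.e., θ(w) ∈ (0, π)), R is differentiable and ∇R(w) = (1/2)(w − w⋆) + (1/(2π))·(θ(w)·w⋆ − (w/‖w‖)·sin θ(w)). -/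
/-!
Write `θ(v) = arccos (⟪v, w⋆⟫ / ‖v‖)` and `g t = sin t + (π - t) cos t`, so that the risk is
`‖v‖² / 4 + 5 / 4 - ‖v‖ g(θ(v)) / (2π)` and `g' t = -(π - t) sin t`. Off the line `ℝ w⋆` the angle
is differentiable with `∇θ(w) = -(‖w‖ sin θ)⁻¹ (w⋆ - cos θ ŵ)`, and the factor `sin θ` of `g'`
cancels its singular factor: the chain and product rules give
`∇(‖v‖ g(θ(v))) = sin θ ŵ + (π - θ) w⋆`, where `ŵ = w / ‖w‖`.
-/

open Real InnerProductSpace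
open scoped RealInnerProductSpace

variable {E : Type*} [NormedAddCommGroup E] [InnerProductSpace ℝ E]

theorem abs_real_inner_div_norm_lt_one_of_forall_ne_smul {u x : E} (hu : ‖u‖ = 1)
    (hx : ∀ c : ℝ, x ≠ c • u) : |⟪x, u⟫ / ‖x‖| < 1 := by
  have hle := abs_real_inner_div_norm_mul_norm_le_one x u
  rw [hu, mul_one] at hle
  refine hle.lt_of_ne fun h => ?_
  obtain ⟨-, r, hr, rfl⟩ :=
    (abs_real_inner_div_norm_mul_norm_eq_one_iff x u).1 (by rwa [hu, mul_one])
  exact hx r⁻¹ (by rw [smul_smul, inv_mul_cancel₀ hr, one_smul])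

section Gradient

variable [CompleteSpace E] {f g : E → ℝ} {f' g' x : E}

theorem HasGradientAt.add_const (hf : HasGradientAt f f' x) (c : ℝ) :
    HasGradientAt (fun v => f v + c) f' x :=
  HasFDerivAt.add_const c hf

theorem HasGradientAt.sub (hf : HasGradientAt f f' x) (hg : HasGradientAt g g' x) :
    HasGradientAt (fun v => f v - g v) (f' - g') x := by
  rw [hasGradientAt_iff_hasFDerivAt, map_sub]
  exact HasFDerivAt.sub hf hg

theorem HasGradientAt.const_mul (hf : HasGradientAt f f' x) (c : ℝ) :
    HasGradientAt (fun v => c * f v) (c • f') x := by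
  rw [hasGradientAt_iff_hasFDerivAt, map_smulₛₗ]
  exact HasFDerivAt.const_mul hf c

theorem HasGradientAt.mul (hf : HasGradientAt f f' x) (hg : HasGradientAt g g' x) :
    HasGradientAt (fun v => f v * g v) (f x • g' + g x • f') x := by
  rw [hasGradientAt_iff_hasFDerivAt, map_add, map_smulₛₗ, map_smulₛₗ]
  exact HasFDerivAt.mul hf hg

theorem HasDerivAt.comp_hasGradientAt {h : ℝ → ℝ} {h' : ℝ} (hh : HasDerivAt h h' (f x))
    (hf : HasGradientAt f f' x) : HasGradientAt (fun v => h (f v)) (h' • f') x := by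
  rw [hasGradientAt_iff_hasFDerivAt, map_smulₛₗ]
  exact hh.comp_hasFDerivAt x hf

theorem HasGradientAt.div (hf : HasGradientAt f f' x) (hg : HasGradientAt g g' x)
    (hx : g x ≠ 0) :
    HasGradientAt (fun v => f v / g v) ((g x)⁻¹ • (f' - (f x / g x) • g')) x := by
  have := hf.mul ((hasDerivAt_inv hx).comp_hasGradientAt hg)
  simp only [← div_eq_mul_inv] at this
  convert this using 1
  rw [smul_sub, smul_smul, smul_smul]
  field_simp
  module

theorem hasGradientAt_inner_const (u x : E) : HasGradientAt (fun v => ⟪v, u⟫) u x := by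
  have h : (fun v => ⟪v, u⟫) = toDual ℝ E u := funext fun v => real_inner_comm u v
  rw [h]
  exact (toDual ℝ E u).hasFDerivAt

theorem hasGradientAt_norm_sq (x : E) : HasGradientAt (fun v => ‖v‖ ^ 2) ((2 : ℝ) • x) x := by
  rw [hasGradientAt_iff_hasFDerivAt, two_smul, map_add, ← two_nsmul]
  exact (hasStrictFDerivAt_norm_sq x).hasFDerivAt

theorem hasGradientAt_norm (hx : x ≠ 0) : HasGradientAt (‖·‖) (‖x‖⁻¹ • x) x := by
  have h : (‖·‖) = fun v : E => √(‖v‖ ^ 2) := funext fun v => (sqrt_sq (norm_nonneg v)).symm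
  have hx' : ‖x‖ ^ 2 ≠ 0 := by positivity
  rw [h]
  convert (hasDerivAt_sqrt hx').comp_hasGradientAt (f := fun v : E => ‖v‖ ^ 2)
    (hasGradientAt_norm_sq x) using 1
  rw [smul_smul, sqrt_sq (norm_nonneg x)]
  field_simp

theorem hasGradientAt_arccos_inner_div_norm {u x : E} (hx : x ≠ 0) (hc : |⟪x, u⟫ / ‖x‖| < 1) :
    HasGradientAt (fun v => arccos (⟪v, u⟫ / ‖v‖))
      (-(‖x‖ * sin (arccos (⟪x, u⟫ / ‖x‖)))⁻¹ • (u - (⟪x, u⟫ / ‖x‖) • ‖x‖⁻¹ • x)) x := by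
  obtain ⟨hc₁, hc₂⟩ := abs_lt.1 hc
  convert (hasDerivAt_arccos hc₁.ne' hc₂.ne).comp_hasGradientAt (f := fun v => ⟪v, u⟫ / ‖v‖)
    ((hasGradientAt_inner_const u x).div (hasGradientAt_norm hx) (norm_ne_zero_iff.2 hx)) using 1
  rw [sin_arccos, mul_inv]
  module

end Gradient

theorem hasDerivAt_sin_add_pi_sub_mul_cos (t : ℝ) :
    HasDerivAt (fun t => sin t + (π - t) * cos t) (-((π - t) * sin t)) t :=
  ((hasDerivAt_sin t).fun_add
    (((hasDerivAt_id' t).const_sub π).fun_mul (hasDerivAt_cos t))).congr_deriv (by ring)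

theorem relu_population_risk_gradient_general
    (d : ℕ) (wstar : EuclideanSpace ℝ (Fin d)) (hws : ‖wstar‖ = 1)
    (w : EuclideanSpace ℝ (Fin d)) (hnc : ∀ c : ℝ, w ≠ c • wstar) :
    HasGradientAt
      (fun v : EuclideanSpace ℝ (Fin d) =>
        (1 / 4 : ℝ) * ‖v‖ ^ 2 + 5 / 4 -
          (1 / (2 * Real.pi)) * ‖v‖ *
            (Real.sin (Real.arccos ((inner ℝ v wstar : ℝ) / ‖v‖)) +
              (Real.pi - Real.arccos ((inner ℝ v wstar : ℝ) / ‖v‖)) *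
                Real.cos (Real.arccos ((inner ℝ v wstar : ℝ) / ‖v‖))))
      ((1 / 2 : ℝ) • (w - wstar) +
        (1 / (2 * Real.pi)) •
          (Real.arccos ((inner ℝ w wstar : ℝ) / ‖w‖) • wstar -
            Real.sin (Real.arccos ((inner ℝ w wstar : ℝ) / ‖w‖)) • (‖w‖⁻¹ • w)))
      w := by
  have hw : w ≠ 0 := fun h => hnc 0 (by rw [h, zero_smul])
  have hc := abs_real_inner_div_norm_lt_one_of_forall_ne_smul hws hnc
  have hR := (((hasGradientAt_norm_sq w).const_mul (1 / 4)).add_const (5 / 4)).sub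
    (((hasGradientAt_norm hw).const_mul (1 / (2 * π))).mul
      ((hasDerivAt_sin_add_pi_sub_mul_cos _).comp_hasGradientAt
        (hasGradientAt_arccos_inner_div_norm hw hc)))
  convert hR using 1
  set c := ⟪w, wstar⟫ / ‖w‖
  set θ := arccos c
  obtain ⟨hc₁, hc₂⟩ := abs_lt.1 hc
  have hcos : cos θ = c := cos_arccos hc₁.le hc₂.le
  have hsin : sin θ ≠ 0 := (sin_pos_of_pos_of_lt_pi (arccos_pos.2 hc₂) (arccos_lt_pi.2 hc₁)).ne'
  have hk : ‖w‖ * ((π - θ) * sin θ) * (‖w‖ * sin θ)⁻¹ = π - θ := by field_simp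
  rw [hcos]
  linear_combination (norm := module) (1 / (2 * π)) • (hk • (wstar - c • ‖w‖⁻¹ • w)) +
    (1 / 2 : ℝ) • (mul_inv_cancel₀ pi_ne_zero • wstar)

/-- the closed-form ReLU population risk
`R(w) = (1/4)‖w‖² + 5/4 - (1/2π)‖w‖(sin θ(w) + (π - θ(w)) cos θ(w))`, with
`θ(w) = arccos(⟨w,w⋆⟩/‖w‖)`, is differentiable at every `w` that is not a scalar multiple
of the unit vector `w⋆`, with gradient
`∇R(w) = (1/2)(w - w⋆) + (1/2π)(θ(w) w⋆ - (w/‖w‖) sin θ(w))`. -/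
theorem relu_population_risk_gradient
    (d : ℕ) (hd : 2 ≤ d) (wstar : EuclideanSpace ℝ (Fin d)) (hws : ‖wstar‖ = 1)
    (w : EuclideanSpace ℝ (Fin d)) (hw0 : w ≠ 0) (hnc : ∀ c : ℝ, w ≠ c • wstar) :
    HasGradientAt
      (fun v : EuclideanSpace ℝ (Fin d) =>
        (1 / 4 : ℝ) * ‖v‖ ^ 2 + 5 / 4 -
          (1 / (2 * Real.pi)) * ‖v‖ *
            (Real.sin (Real.arccos ((inner ℝ v wstar : ℝ) / ‖v‖)) +
              (Real.pi - Real.arccos ((inner ℝ v wstar : ℝ) / ‖v‖)) *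
                Real.cos (Real.arccos ((inner ℝ v wstar : ℝ) / ‖v‖))))
      ((1 / 2 : ℝ) • (w - wstar) +
        (1 / (2 * Real.pi)) •
          (Real.arccos ((inner ℝ w wstar : ℝ) / ‖w‖) • wstar -
            Real.sin (Real.arccos ((inner ℝ w wstar : ℝ) / ‖w‖)) • (‖w‖⁻¹ • w)))
      w :=
  relu_population_risk_gradient_general d wstar hws w hnc
end

section
/- Define g : ℝ → ℝ by g(t) = t²/100 − t/(10π) + arctan(t)/(10π). Then g''(0.6) < 0; in particular, g is not convex on the interval [0, 1]. -/
/-!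
Where `g` is convex its derivative is monotone, so `g''` is nonnegative at interior points.
But `g''(t) = 1/50 - t / (5π (1 + t²)²)`, and at `t = 0.6` this is negative as soon as
`π < 3.24`.
-/

open Real Filter Set Topology

theorem ConvexOn.deriv_deriv_nonneg {s : Set ℝ} {f : ℝ → ℝ} {x : ℝ} (hf : ConvexOn ℝ s f)
    (hs : s ∈ 𝓝 x) (hfd : ∀ y ∈ s, DifferentiableAt ℝ f y)
    (hf' : DifferentiableAt ℝ (deriv f) x) : 0 ≤ deriv (deriv f) x := by
  have hacc : AccPt x (𝓟 s) :=
    accPt_iff_frequently_nhdsNE.2 (eventually_nhdsWithin_of_eventually_nhds hs).frequently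
  exact hf'.hasDerivAt.hasDerivWithinAt.nonneg_of_monotoneOn hacc (hf.monotoneOn_deriv hfd)

noncomputable def restrictedRisk (t : ℝ) : ℝ :=
  t ^ 2 / 100 - t / (10 * π) + arctan t / (10 * π)

theorem hasDerivAt_restrictedRisk (t : ℝ) :
    HasDerivAt restrictedRisk (t / 50 - 1 / (10 * π) + (1 + t ^ 2)⁻¹ / (10 * π)) t := by
  refine ((((hasDerivAt_pow 2 t).div_const 100).sub ((hasDerivAt_id t).div_const (10 * π))).add
    ((hasDerivAt_arctan t).div_const (10 * π))).congr_deriv ?_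
  push_cast; ring

theorem deriv_restrictedRisk :
    deriv restrictedRisk = fun t ↦ t / 50 - 1 / (10 * π) + (1 + t ^ 2)⁻¹ / (10 * π) :=
  funext fun t ↦ (hasDerivAt_restrictedRisk t).deriv

theorem hasDerivAt_deriv_restrictedRisk (t : ℝ) :
    HasDerivAt (deriv restrictedRisk) (1 / 50 - t / (5 * π * (1 + t ^ 2) ^ 2)) t := by
  have h : HasDerivAt (fun t : ℝ ↦ 1 + t ^ 2) (2 * t) t := by
    simpa using (hasDerivAt_pow 2 t).const_add 1
  rw [deriv_restrictedRisk]
  refine ((((hasDerivAt_id t).div_const 50).sub_const (1 / (10 * π))).add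
    ((h.inv (by positivity)).div_const (10 * π))).congr_deriv ?_
  field_simp; ring

theorem deriv_deriv_restrictedRisk_neg : deriv (deriv restrictedRisk) 0.6 < 0 := by
  rw [(hasDerivAt_deriv_restrictedRisk 0.6).deriv, sub_neg, lt_div_iff₀ (by positivity)]
  nlinarith [pi_lt_d2]

/-- the function `g(t) = t²/100 - t/(10π) + arctan(t)/(10π)` has
`g''(0.6) < 0`; in particular it is not convex on `[0,1]`. -/
theorem relu_restricted_risk_nonconvex :
    deriv (deriv (fun t : ℝ =>
        t ^ 2 / 100 - t / (10 * Real.pi) + Real.arctan t / (10 * Real.pi))) 0.6 < 0 ∧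
    ¬ ConvexOn ℝ (Set.Icc (0 : ℝ) 1) (fun t : ℝ =>
        t ^ 2 / 100 - t / (10 * Real.pi) + Real.arctan t / (10 * Real.pi)) := by
  refine ⟨deriv_deriv_restrictedRisk_neg, fun hconv ↦ deriv_deriv_restrictedRisk_neg.not_ge ?_⟩
  exact hconv.deriv_deriv_nonneg (Icc_mem_nhds (by norm_num) (by norm_num))
    (fun y _ ↦ (hasDerivAt_restrictedRisk y).differentiableAt)
    (hasDerivAt_deriv_restrictedRisk 0.6).differentiableAt
end
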